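/- arXiv:1906.06179 — 5 statements merged into one kernel-verified Lean document; each statement's English description precedes it below -/
import Mathlib

section
/- For all natural numbers p, q with 0 < q < p, there exists a (0,p)-mediated sequence A containing q whose cardinality satisfies #A < (1/2)·(log₂(p) + 3/2)². -/
/-- For integers `s < p`, an `(s,p)`-mediated sequence is a finite set `A` of integers with
`s, p ∈ A`, `min A = s`, `max A = p`, and such that every element of `A` other than `s` and `p`
is the average `(v+w)/2` of two distinct elements `v, w ∈ A`. -/
def IsMediatedSeq (s p : ℤ) (A : Finset ℤ) : Prop :=
  s ∈ A ∧ p ∈ A ∧ (∀ a ∈ A, s ≤ a ∧ a ≤ p) ∧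
    ∀ a ∈ A, a ≠ s → a ≠ p → ∃ v ∈ A, ∃ w ∈ A, v ≠ w ∧ 2 * a = v + w

/-!
Reflection `a ↦ s + p - a` preserves `(s,p)`-mediated sequences, so one may assume `2x ≤ s + p`.
Repeated bisection of `[L, L + 2^k]` towards `x` then gives an `(L, L + 2^k)`-mediated sequence
through `x` with at most `k + 2` elements. If `2^n ≤ p - s < 2^(n+1)` and `x ≤ m := s + 2^n`, the
bisections of `[s, m]` towards `x` and towards `2m - p`, together with `p`, form an
`(s,p)`-mediated sequence (`m` is the average of `2m - p` and `p`) of at most `2n + 3` elements.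
This is below `½(log₂ p + 3/2)²` as soon as `p ≥ 8`; for `p < 8` the whole interval `[0, p]` does.
-/

open Finset

def HasMediatedSeq (s p x : ℤ) (c : ℕ) : Prop :=
  ∃ A : Finset ℤ, IsMediatedSeq s p A ∧ x ∈ A ∧ A.card ≤ c

section

variable {s m p u x : ℤ} {c : ℕ} {A B : Finset ℤ}

theorem IsMediatedSeq.union (hA : IsMediatedSeq s p A) (hB : IsMediatedSeq s p B) :
    IsMediatedSeq s p (A ∪ B) := by
  obtain ⟨hsA, hpA, hboundA, hmedA⟩ := hA
  obtain ⟨-, -, hboundB, hmedB⟩ := hB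
  refine ⟨mem_union_left _ hsA, mem_union_left _ hpA, fun a ha => ?_, fun a ha has hap => ?_⟩
  · rcases mem_union.1 ha with ha | ha
    exacts [hboundA a ha, hboundB a ha]
  · rcases mem_union.1 ha with ha | ha
    · obtain ⟨v, hv, w, hw, hvw, h⟩ := hmedA a ha has hap
      exact ⟨v, mem_union_left _ hv, w, mem_union_left _ hw, hvw, h⟩
    · obtain ⟨v, hv, w, hw, hvw, h⟩ := hmedB a ha has hap
      exact ⟨v, mem_union_right _ hv, w, mem_union_right _ hw, hvw, h⟩

theorem IsMediatedSeq.insert_of_two_mul_eq (hA : IsMediatedSeq s m A) (hmp : m ≤ p)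
    (hu : u ∈ A) (hm : 2 * m = u + p) : IsMediatedSeq s p (insert p A) := by
  obtain ⟨hs, -, hbound, hmed⟩ := hA
  refine ⟨mem_insert_of_mem hs, mem_insert_self p A, fun a ha => ?_, fun a ha has hap => ?_⟩
  · rcases mem_insert.1 ha with rfl | ha
    · exact ⟨(hbound s hs).2.trans hmp, le_rfl⟩
    · exact ⟨(hbound a ha).1, (hbound a ha).2.trans hmp⟩
  · rcases mem_insert.1 ha with rfl | ha
    · exact absurd rfl hap
    by_cases ham : a = m
    · subst ham
      exact ⟨u, mem_insert_of_mem hu, p, mem_insert_self p A,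
        ((hbound u hu).2.trans_lt (lt_of_le_of_ne hmp hap)).ne, hm⟩
    · obtain ⟨v, hv, w, hw, hvw, h⟩ := hmed a ha has ham
      exact ⟨v, mem_insert_of_mem hv, w, mem_insert_of_mem hw, hvw, h⟩

theorem IsMediatedSeq.reflect (hA : IsMediatedSeq s p A) :
    IsMediatedSeq s p (A.image (s + p - ·)) := by
  obtain ⟨hs, hp, hbound, hmed⟩ := hA
  refine ⟨mem_image.2 ⟨p, hp, by ring⟩, mem_image.2 ⟨s, hs, by ring⟩,
    fun b hb => ?_, fun b hb hbs hbp => ?_⟩ <;> obtain ⟨a, ha, rfl⟩ := mem_image.1 hb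
  · have := hbound a ha
    constructor <;> linarith
  · obtain ⟨v, hv, w, hw, hvw, h⟩ :=
      hmed a ha (by rintro rfl; simp at hbp) (by rintro rfl; simp at hbs)
    exact ⟨s + p - v, mem_image_of_mem _ hv, s + p - w, mem_image_of_mem _ hw,
      by omega, by linarith⟩

theorem isMediatedSeq_Icc (h : s ≤ p) : IsMediatedSeq s p (Icc s p) := by
  refine ⟨left_mem_Icc.2 h, right_mem_Icc.2 h, fun a ha => mem_Icc.1 ha, fun a ha has hap => ?_⟩
  rw [mem_Icc] at ha
  exact ⟨a - 1, mem_Icc.2 ⟨by omega, by omega⟩, a + 1, mem_Icc.2 ⟨by omega, by omega⟩,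
    by omega, by ring⟩

theorem HasMediatedSeq.reflect (h : HasMediatedSeq s p x c) :
    HasMediatedSeq s p (s + p - x) c := by
  obtain ⟨A, hA, hx, hc⟩ := h
  exact ⟨_, hA.reflect, mem_image_of_mem _ hx, card_image_le.trans hc⟩

theorem hasMediatedSeq_of_forall_two_mul_le
    (h : ∀ y, s ≤ y → 2 * y ≤ s + p → HasMediatedSeq s p y c) (hsx : s ≤ x) (hxp : x ≤ p) :
    HasMediatedSeq s p x c := by
  rcases le_total (2 * x) (s + p) with hx | hx
  · exact h x hsx hx
  · simpa using (h (s + p - x) (by omega) (by omega)).reflect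

theorem hasMediatedSeq_Icc (hsx : s ≤ x) (hxp : x ≤ p) :
    HasMediatedSeq s p x (p + 1 - s).toNat :=
  ⟨Icc s p, isMediatedSeq_Icc (hsx.trans hxp), mem_Icc.2 ⟨hsx, hxp⟩, (Int.card_Icc s p).le⟩

theorem hasMediatedSeq_add_two_pow (k : ℕ) {L x : ℤ} (hL : L ≤ x) (hx : x ≤ L + 2 ^ k) :
    HasMediatedSeq L (L + 2 ^ k) x (k + 2) := by
  induction k generalizing L x with
  | zero => simpa [show (L + 1 + 1 - L).toNat = 2 by omega] using hasMediatedSeq_Icc hL hx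
  | succ k ih =>
    have hpow : (2 : ℤ) ^ (k + 1) = 2 * 2 ^ k := by ring
    have hpos : (0 : ℤ) < 2 ^ k := by positivity
    refine hasMediatedSeq_of_forall_two_mul_le (fun y hLy hy => ?_) hL hx
    obtain ⟨A, hA, hyA, hAc⟩ := ih hLy (by omega)
    exact ⟨_, hA.insert_of_two_mul_eq (by omega) hA.1 (by omega), mem_insert_of_mem hyA,
      (card_insert_le _ _).trans (by omega)⟩

theorem hasMediatedSeq_of_two_pow_le (n : ℕ) (hn : 2 ^ n ≤ p - s) (hn' : p - s < 2 ^ (n + 1))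
    (hsx : s ≤ x) (hxp : x ≤ p) : HasMediatedSeq s p x (2 * n + 3) := by
  have hpow : (2 : ℤ) ^ (n + 1) = 2 * 2 ^ n := by ring
  have hpos : (0 : ℤ) < 2 ^ n := by positivity
  refine hasMediatedSeq_of_forall_two_mul_le (fun y hsy hy => ?_) hsx hxp
  obtain ⟨B, hB, hyB, hBc⟩ := hasMediatedSeq_add_two_pow n hsy (by omega)
  obtain ⟨C, hC, huC, hCc⟩ :=
    hasMediatedSeq_add_two_pow n (L := s) (x := 2 * (s + 2 ^ n) - p) (by omega) (by omega)
  have hinter : 2 ≤ (B ∩ C).card := by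
    have hsub : {s, s + 2 ^ n} ⊆ B ∩ C :=
      insert_subset (mem_inter.2 ⟨hB.1, hC.1⟩)
        (singleton_subset_iff.2 (mem_inter.2 ⟨hB.2.1, hC.2.1⟩))
    simpa [card_pair (by omega : s ≠ s + 2 ^ n)] using card_le_card hsub
  refine ⟨_, (hB.union hC).insert_of_two_mul_eq (by omega) (mem_union_right _ huC) (by ring),
    mem_insert_of_mem (mem_union_left _ hyB), ?_⟩
  have := card_union_add_card_inter B C
  have := card_insert_le p (B ∪ C)
  omega

end

theorem div_le_logb_two_of_two_pow_le {a b p : ℕ} (hb : 0 < b) (h : 2 ^ a ≤ p ^ b) :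
    (a / b : ℝ) ≤ Real.logb 2 p := by
  have := Real.logb_le_logb_of_le one_lt_two (by positivity)
    (show (2 : ℝ) ^ a ≤ (p : ℝ) ^ b by exact_mod_cast h)
  rw [Real.logb_pow, Real.logb_pow, Real.logb_self_eq_one one_lt_two, mul_one] at this
  rw [div_le_iff₀ (by positivity)]
  linarith

theorem natCast_lt_half_mul_logb_two_add_sq {a b c p : ℕ} (hb : 0 < b) (h : 2 ^ a ≤ p ^ b)
    (hc : 2 * c * b ^ 2 ≤ (a + b) * (a + 2 * b)) :
    (c : ℝ) < 1 / 2 * (Real.logb 2 p + 3 / 2) ^ 2 := by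
  have hlog := div_le_logb_two_of_two_pow_le hb h
  have hcx : 2 * (c : ℝ) ≤ (a / b + 1) * (a / b + 2) := by
    have hbR : (0 : ℝ) < b := by exact_mod_cast hb
    rw [show ((a : ℝ) / b + 1) * (a / b + 2) = (a + b) * (a + 2 * b) / b ^ 2 by field_simp,
      le_div_iff₀ (by positivity)]
    exact_mod_cast hc
  have hx : (0 : ℝ) ≤ a / b := by positivity
  nlinarith [mul_nonneg (sub_nonneg.2 hlog) (by linarith : 0 ≤ Real.logb 2 p + a / b + 3)]

/-- For all natural numbers `p, q` with `0 < q < p`, there exists a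
`(0,p)`-mediated sequence `A` containing `q` with `#A < (1/2)·(log₂ p + 3/2)²`. -/
theorem exists_mediated_seq_card_lt (p q : ℕ) (hq : 0 < q) (hqp : q < p) :
    ∃ A : Finset ℤ, IsMediatedSeq 0 (p : ℤ) A ∧ (q : ℤ) ∈ A ∧
      (A.card : ℝ) < (1 / 2) * (Real.logb 2 (p : ℝ) + 3 / 2) ^ 2 := by
  suffices ∃ a b c : ℕ, 0 < b ∧ 2 ^ a ≤ p ^ b ∧ 2 * c * b ^ 2 ≤ (a + b) * (a + 2 * b) ∧
      HasMediatedSeq 0 p q c by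
    obtain ⟨a, b, c, hb, hab, hc, A, hA, hqA, hAc⟩ := this
    exact ⟨A, hA, hqA,
      (Nat.cast_le.2 hAc).trans_lt (natCast_lt_half_mul_logb_two_add_sq hb hab hc)⟩
  have hq0 : (0 : ℤ) ≤ q := Int.natCast_nonneg q
  have hqp' : (q : ℤ) ≤ p := by exact_mod_cast hqp.le
  rcases lt_or_ge p 8 with hp | hp
  · refine ⟨Nat.log 2 (p ^ 4), 4, p + 1, by norm_num,
      Nat.pow_log_le_self 2 (pow_ne_zero _ (by omega)), ?_,
      by simpa using hasMediatedSeq_Icc hq0 hqp'⟩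
    -- `⌊log₂ p⁴⌋ / 4` is a close enough lower bound for `log₂ p` here; `⌊log₂ p⌋` is not (p = 3).
    have : 2 ≤ p := by omega
    interval_cases p <;> norm_num
  · set n := Nat.log 2 p
    have hn : 3 ≤ n := Nat.le_log_of_pow_le one_lt_two (by omega)
    have hlow : 2 ^ n ≤ p := Nat.pow_log_le_self 2 (by omega)
    have hhigh : p < 2 ^ (n + 1) := Nat.lt_pow_succ_log_self one_lt_two p
    refine ⟨n, 1, 2 * n + 3, one_pos, by simpa using hlow, by nlinarith,
      hasMediatedSeq_of_two_pow_le n ?_ ?_ hq0 hqp'⟩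
    · rw [sub_zero]; exact_mod_cast hlow
    · rw [sub_zero]; exact_mod_cast hhigh
end

section
/- For every integer p ≥ 2, the minimum cardinality of a (0,p)-mediated sequence containing 1 equals ⌈log₂(p)⌉ + 2. -/
open Finset

namespace IsMediatedSeq

variable {s q : ℤ} {A : Finset ℤ}

theorem insert_of_two_mul_eq_s2 (hA : IsMediatedSeq s q A) {p e : ℤ} (he : e ∈ A) (hqp : q < p)
    (hpe : 2 * q = p + e) : IsMediatedSeq s p (insert p A) := by
  obtain ⟨hs, hq, hbd, hmed⟩ := hA
  have hsp : s ≤ p := ((hbd q hq).1).trans hqp.le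
  refine ⟨mem_insert_of_mem hs, mem_insert_self p A, ?_, ?_⟩
  · intro a ha
    rcases mem_insert.1 ha with rfl | ha
    · exact ⟨hsp, le_rfl⟩
    · exact ⟨(hbd a ha).1, (hbd a ha).2.trans hqp.le⟩
  · intro a ha has hap
    have ha : a ∈ A := (mem_insert.1 ha).resolve_left hap
    by_cases haq : a = q
    · subst haq
      exact ⟨p, mem_insert_self p A, e, mem_insert_of_mem he, by linarith [(hbd e he).2], hpe⟩
    · obtain ⟨v, hv, w, hw, hvw, h⟩ := hmed a ha has haq
      exact ⟨v, mem_insert_of_mem hv, w, mem_insert_of_mem hw, hvw, h⟩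

theorem exists_lt_le_two_mul (hA : IsMediatedSeq 0 q A) (h1 : 1 ∈ A) {a : ℤ} (ha : a ∈ A)
    (ha1 : 1 < a) : ∃ b ∈ A, 0 < b ∧ b < a ∧ a ≤ 2 * b := by
  obtain ⟨-, -, hbd, hmed⟩ := hA
  obtain ⟨b, hb, hbmax⟩ := exists_max_image {x ∈ A | x < a} id ⟨1, mem_filter.2 ⟨h1, ha1⟩⟩
  obtain ⟨hbA, hba⟩ := mem_filter.1 hb
  have hb1 : 1 ≤ b := hbmax 1 (mem_filter.2 ⟨h1, ha1⟩)
  have hbq : b ≠ q := by linarith [(hbd a ha).2]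
  obtain ⟨v, hv, w, hw, hvw, hbvw⟩ := hmed b hbA (by omega) hbq
  have key : ∀ v ∈ A, ∀ w ∈ A, v < w → 2 * b = v + w → a ≤ 2 * b := by
    intro v hv w hw hvw hbvw
    have haw : a ≤ w := by
      by_contra! hwa
      have : w ≤ b := hbmax w (mem_filter.2 ⟨hw, hwa⟩)
      omega
    linarith [(hbd v hv).1]
  refine ⟨b, hbA, by omega, hba, ?_⟩
  rcases hvw.lt_or_gt with h | h
  · exact key v hv w hw h hbvw
  · exact key w hw v hv h (by rw [hbvw, add_comm])

end IsMediatedSeq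

theorem four_mul_le_two_pow_card_filter_le {A : Finset ℤ} (h0 : 0 ∈ A) (h1 : 1 ∈ A)
    (hgap : ∀ a ∈ A, 1 < a → ∃ b ∈ A, 0 < b ∧ b < a ∧ a ≤ 2 * b) :
    ∀ a ∈ A, 0 < a → 4 * a ≤ 2 ^ #{x ∈ A | x ≤ a} := by
  intro a
  induction a using Int.strongRec (m := 1) with
  | lt a ha => intro _ h; omega
  | ge a ha1 ih =>
    intro ha _
    rcases ha1.eq_or_lt with rfl | ha1
    · have : 2 ≤ #{x ∈ A | x ≤ 1} := one_lt_card.2 ⟨0, by simp [h0], 1, by simp [h1], by norm_num⟩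
      calc (4 : ℤ) * 1 = 2 ^ 2 := by norm_num
        _ ≤ 2 ^ #{x ∈ A | x ≤ 1} := pow_le_pow_right₀ (by norm_num) this
    · obtain ⟨b, hb, hb0, hba, hab⟩ := hgap a ha ha1
      have hcard : #{x ∈ A | x ≤ b} < #{x ∈ A | x ≤ a} := by
        refine card_lt_card ((ssubset_iff_of_subset ?_).2 ⟨a, ?_, ?_⟩)
        · exact monotone_filter_right A fun x _ hx => hx.trans hba.le
        · simp [ha]
        · simp [hba]
      calc 4 * a ≤ 2 * (4 * b) := by omega
        _ ≤ 2 * 2 ^ #{x ∈ A | x ≤ b} := by linarith [ih b hba hb hb0]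
        _ = 2 ^ (#{x ∈ A | x ≤ b} + 1) := by ring
        _ ≤ 2 ^ #{x ∈ A | x ≤ a} := pow_le_pow_right₀ (by norm_num) hcard

theorem IsMediatedSeq.clog_add_two_le_card {p : ℕ} {A : Finset ℤ} (hA : IsMediatedSeq 0 p A)
    (h1 : 1 ∈ A) : Nat.clog 2 p + 2 ≤ #A := by
  have hgap := fun a ha => hA.exists_lt_le_two_mul h1 (a := a) ha
  obtain ⟨h0, hp, hbd, -⟩ := hA
  have h := four_mul_le_two_pow_card_filter_le h0 h1 hgap p hp (by linarith [(hbd 1 h1).2])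
  rw [filter_true_of_mem fun x hx => (hbd x hx).2] at h
  have h4 : 4 * p ≤ 2 ^ #A := by exact_mod_cast h
  have h2 : 2 ≤ #A := one_lt_card.2 ⟨0, h0, 1, h1, by norm_num⟩
  obtain ⟨n, hn⟩ : ∃ n, #A = n + 2 := ⟨#A - 2, by omega⟩
  rw [hn, pow_add] at h4
  rw [hn, add_le_add_iff_right, Nat.clog_le_iff_le_pow one_lt_two]
  omega

theorem exists_isMediatedSeq_card_le_clog (p : ℕ) (hp : 1 ≤ p) :
    ∃ A : Finset ℤ, IsMediatedSeq 0 p A ∧ 1 ∈ A ∧ #A ≤ Nat.clog 2 p + 2 := by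
  induction p using Nat.strong_induction_on with
  | _ p ih =>
    rcases hp.eq_or_lt with rfl | hp
    · exact ⟨{0, 1}, ⟨by simp, by simp, by simp, fun a ha h0 h1 => by simp_all⟩, by simp, by simp⟩
    set q := (p + 1) / 2
    obtain ⟨A, hA, h1, hcard⟩ := ih q (by omega) (by omega)
    have he : (2 * q - p : ℤ) ∈ A := by
      rcases Nat.even_or_odd p with ⟨r, hr⟩ | ⟨r, hr⟩
      · convert hA.1 using 1; omega
      · convert h1 using 1; omega
    refine ⟨insert (p : ℤ) A, hA.insert_of_two_mul_eq_s2 he (by omega) (by ring),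
      mem_insert_of_mem h1, ?_⟩
    rw [Nat.clog_of_two_le one_lt_two hp, show (p + 2 - 1) / 2 = q by omega]
    exact (card_insert_le _ _).trans (by omega)

/-- For every integer `p ≥ 2`, the minimum cardinality of a `(0,p)`-mediated
sequence containing `1` equals `⌈log₂ p⌉ + 2`. -/
theorem minimal_mediated_seq_card (p : ℕ) (hp : 2 ≤ p) :
    IsLeast {k : ℕ | ∃ A : Finset ℤ, IsMediatedSeq 0 (p : ℤ) A ∧ (1 : ℤ) ∈ A ∧ A.card = k}
      (⌈Real.logb 2 (p : ℝ)⌉₊ + 2) := by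
  rw [show ⌈Real.logb 2 (p : ℝ)⌉₊ = Nat.clog 2 p by exact_mod_cast Real.natCeil_logb_natCast 2 p]
  obtain ⟨A, hA, h1, hcard⟩ := exists_isMediatedSeq_card_le_clog p (by omega)
  refine ⟨⟨A, hA, h1, le_antisymm hcard (hA.clog_add_two_le_card h1)⟩, ?_⟩
  rintro k ⟨B, hB, h1B, rfl⟩
  exact hB.clog_add_two_le_card h1B
end

section
/- Let α₁ ≠ α₂ be two points of ℚⁿ and let β = (1 − q/p)·α₁ + (q/p)·α₂ where p, q ∈ ℕ, 0 < q < p and gcd(p,q) = 1. Then there exists an {α₁,α₂}-rational mediated set M containing β whose cardinality satisfies #M < (1/2)·(log₂(p) + 3/2)². -/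
/-!
Write `β = lineMap α₁ α₂ (q / p)`. It suffices to find a set `S` of naturals containing `0`, `p`
and `q` in which every other element is the average of two distinct elements: its image under
`k ↦ lineMap α₁ α₂ (k / p)` is the required mediated set. Swapping `α₁` and `α₂` we may assume
`2 q ≤ p`. Let `2 ^ m ≤ p < 2 ^ (m + 1)`. For `k < 2 ^ m`, the orbit of `k` under
`x ↦ 2 x mod 2 ^ m` together with `2 ^ m` is such a set for the interval `[0, 2 ^ m]`, of size
at most `m + 2`. If `p > 2 ^ m`, then `2 ^ m` is the average of `p` and `r = 2 ^ (m + 1) - p`,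
and the orbits of `q` and `r`, which share `0` and `2 ^ (m - 1)`, give a set of size at most
`2 m + 2`. Both bounds are below `(log₂ p + 3 / 2) ^ 2 / 2`.
-/

/-- For a finite affinely independent set `A ⊆ ℚⁿ`, a finite set `M ⊆ ℚⁿ` is an `A`-rational
mediated set if `A ⊆ M` and every point of `M \ A` is the average of two distinct points
of `M`. -/
def IsRatMediatedSet {n : ℕ} (A M : Finset (Fin n → ℚ)) : Prop :=
  A ⊆ M ∧ ∀ u ∈ M, u ∉ A → ∃ v ∈ M, ∃ w ∈ M, v ≠ w ∧ u = (2⁻¹ : ℚ) • (v + w)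

open Finset

/-- `IsRatMediatedSet` for points `k / p` of a line, recorded by their numerators `k`. -/
def IsNatMediatedSet (A S : Finset ℕ) : Prop :=
  A ⊆ S ∧ ∀ k ∈ S, k ∉ A → ∃ a ∈ S, ∃ b ∈ S, a ≠ b ∧ a + b = 2 * k

namespace IsNatMediatedSet

variable {A S T : Finset ℕ}

theorem union (hS : IsNatMediatedSet A S) (hT : IsNatMediatedSet A T) :
    IsNatMediatedSet A (S ∪ T) := by
  refine ⟨hS.1.trans subset_union_left, fun k hk hkA => ?_⟩
  rcases mem_union.1 hk with hkS | hkT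
  · obtain ⟨a, ha, b, hb, hab, h⟩ := hS.2 k hkS hkA
    exact ⟨a, mem_union_left _ ha, b, mem_union_left _ hb, hab, h⟩
  · obtain ⟨a, ha, b, hb, hab, h⟩ := hT.2 k hkT hkA
    exact ⟨a, mem_union_right _ ha, b, mem_union_right _ hb, hab, h⟩

theorem insert_of_add_eq {N p r : ℕ} (hS : IsNatMediatedSet {0, N} S) (hr : r ∈ S)
    (hpr : p + r = 2 * N) : IsNatMediatedSet {0, p} (insert p S) := by
  refine ⟨?_, fun k hk hkA => ?_⟩
  · simp [insert_subset_iff, hS.1 (mem_insert_self 0 _)]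
  simp only [mem_insert, mem_singleton, not_or] at hkA
  have hkS : k ∈ S := (mem_insert.1 hk).resolve_left hkA.2
  by_cases hkN : k = N
  · exact ⟨p, mem_insert_self p S, r, mem_insert_of_mem hr, by omega, by omega⟩
  · obtain ⟨a, ha, b, hb, hab, h⟩ := hS.2 k hkS (by simp [hkA.1, hkN])
    exact ⟨a, mem_insert_of_mem ha, b, mem_insert_of_mem hb, hab, h⟩

end IsNatMediatedSet

/-- The orbit of `k / 2 ^ m` under the doubling map `x ↦ 2 x mod 1`, scaled by `2 ^ m`. -/
def doublingOrbit (m k : ℕ) : Finset ℕ :=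
  (range (m + 1)).image fun t => 2 ^ t * k % 2 ^ m

section doublingOrbit

variable {m k : ℕ}

theorem zero_mem_doublingOrbit : 0 ∈ doublingOrbit m k :=
  mem_image.2 ⟨m, self_mem_range_succ m, by simp⟩

theorem self_mem_doublingOrbit (hk : k < 2 ^ m) : k ∈ doublingOrbit m k :=
  mem_image.2 ⟨0, by simp, by simp [Nat.mod_eq_of_lt hk]⟩

theorem two_pow_pred_mem_doublingOrbit (hk₀ : 0 < k) (hk : k < 2 ^ m) :
    2 ^ (m - 1) ∈ doublingOrbit m k := by
  obtain ⟨ν, o, ⟨j, rfl⟩, rfl⟩ := Nat.exists_eq_two_pow_mul_odd hk₀.ne'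
  have hν : ν < m := (Nat.pow_lt_pow_iff_right (by norm_num)).1 <|
    (Nat.le_mul_of_pos_right _ (by omega)).trans_lt hk
  refine mem_image.2 ⟨m - 1 - ν, by simp; omega, ?_⟩
  have hm : 2 ^ m = 2 * 2 ^ (m - 1) := by rw [← pow_succ']; congr 1; omega
  rw [← mul_assoc, ← pow_add, Nat.sub_add_cancel (by omega), hm, mul_add, mul_one,
    ← mul_assoc, mul_comm (2 ^ (m - 1)) 2, Nat.mul_add_mod,
    Nat.mod_eq_of_lt (by omega)]

theorem card_doublingOrbit_le : (doublingOrbit m k).card ≤ m + 1 :=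
  card_image_le.trans (card_range _).le

/-- Each nonzero `x` in the orbit is the average of `2 x mod 2 ^ m`, again in the orbit, and
of `0` or `2 ^ m`. -/
theorem isNatMediatedSet_insert_doublingOrbit :
    IsNatMediatedSet {0, 2 ^ m} (insert (2 ^ m) (doublingOrbit m k)) := by
  refine ⟨by simp [insert_subset_iff, zero_mem_doublingOrbit], fun x hx hxA => ?_⟩
  simp only [mem_insert, mem_singleton, not_or] at hxA
  obtain ⟨t, ht, rfl⟩ := mem_image.1 ((mem_insert.1 hx).resolve_left hxA.2)
  have htm : t < m := by
    by_contra! h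
    exact hxA.1 (by simp [show t = m by simp at ht; omega])
  have hnext : 2 * (2 ^ t * k % 2 ^ m) % 2 ^ m ∈ doublingOrbit m k :=
    mem_image.2 ⟨t + 1, by simp; omega, by rw [Nat.mul_mod_mod, pow_succ', mul_assoc]⟩
  have hxN : 2 ^ t * k % 2 ^ m < 2 ^ m := Nat.mod_lt _ (by positivity)
  generalize 2 ^ t * k % 2 ^ m = x at hxA hxN hnext ⊢
  have hN : 0 < 2 ^ m := by positivity
  generalize 2 ^ m = N at hN hxA hxN hnext ⊢
  refine ⟨N * (2 * x / N), ?_, 2 * x % N, mem_insert_of_mem hnext, ?_, Nat.div_add_mod _ _⟩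
  all_goals
    obtain h | h : 2 * x / N = 0 ∨ 2 * x / N = 1 := by
      have : 2 * x / N < 2 := Nat.div_lt_of_lt_mul (by omega)
      generalize 2 * x / N = d at this
      omega
  · simp [h, zero_mem_doublingOrbit]
  · simp [h]
  · rw [h, mul_zero, Nat.mod_eq_of_lt ((Nat.div_eq_zero_iff_lt hN).1 h)]
    omega
  · rw [h, mul_one]
    exact (Nat.mod_lt _ hN).ne'

end doublingOrbit

theorem card_doublingOrbit_union_le {m r c : ℕ} (hr₀ : 0 < r) (hr : r < 2 ^ m) (hc₀ : 0 < c)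
    (hc : c < 2 ^ m) : (doublingOrbit m r ∪ doublingOrbit m c).card ≤ 2 * m := by
  have hshared : ({0, 2 ^ (m - 1)} : Finset ℕ) ⊆ doublingOrbit m r ∩ doublingOrbit m c := by
    simp [insert_subset_iff, zero_mem_doublingOrbit, two_pow_pred_mem_doublingOrbit, *]
  have := card_le_card hshared
  rw [card_pair (by positivity)] at this
  have := card_union_add_card_inter (doublingOrbit m r) (doublingOrbit m c)
  have := card_doublingOrbit_le (m := m) (k := r)
  have := card_doublingOrbit_le (m := m) (k := c)
  omega

theorem exists_isNatMediatedSet_two_pow {m k : ℕ} (hk : k < 2 ^ m) :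
    ∃ S, IsNatMediatedSet {0, 2 ^ m} S ∧ k ∈ S ∧ S.card ≤ m + 2 :=
  ⟨_, isNatMediatedSet_insert_doublingOrbit, mem_insert_of_mem (self_mem_doublingOrbit hk),
    (card_insert_le _ _).trans (by linarith [card_doublingOrbit_le (m := m) (k := k)])⟩

theorem exists_isNatMediatedSet_of_two_pow_lt {m p c : ℕ} (hp : 2 ^ m < p)
    (hp' : p < 2 ^ (m + 1)) (hc₀ : 0 < c) (hc : c < 2 ^ m) :
    ∃ S, IsNatMediatedSet {0, p} S ∧ c ∈ S ∧ S.card ≤ 2 * m + 2 := by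
  set r := 2 ^ (m + 1) - p
  have hpow : 2 ^ (m + 1) = 2 * 2 ^ m := pow_succ' 2 m
  have hmed : IsNatMediatedSet {0, 2 ^ m}
      (insert (2 ^ m) (doublingOrbit m r ∪ doublingOrbit m c)) := by
    rw [insert_union_distrib]
    exact isNatMediatedSet_insert_doublingOrbit.union isNatMediatedSet_insert_doublingOrbit
  refine ⟨_, hmed.insert_of_add_eq (r := r) ?_ (by omega), ?_, ?_⟩
  · exact mem_insert_of_mem (mem_union_left _ (self_mem_doublingOrbit (by omega)))
  · exact mem_insert_of_mem (mem_insert_of_mem (mem_union_right _ (self_mem_doublingOrbit hc)))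
  · have := card_doublingOrbit_union_le (m := m) (r := r) (by omega) (by omega) hc₀ hc
    have := card_insert_le (2 ^ m) (doublingOrbit m r ∪ doublingOrbit m c)
    have := card_insert_le p (insert (2 ^ m) (doublingOrbit m r ∪ doublingOrbit m c))
    omega

theorem natCast_le_mul_logb_two {a d p : ℕ} (h : 2 ^ a ≤ p ^ d) :
    (a : ℝ) ≤ d * Real.logb 2 p := by
  have := Real.logb_le_logb_of_le (b := 2) one_lt_two (by positivity)
    (show (2 : ℝ) ^ a ≤ (p : ℝ) ^ d by exact_mod_cast h)
  rwa [Real.logb_pow, Real.logb_pow, Real.logb_self_eq_one one_lt_two, mul_one] at this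

theorem two_mul_add_two_lt_of_two_pow_lt {m p : ℕ} (hm : 1 ≤ m) (hp : 2 ^ m < p) :
    2 * (m : ℝ) + 2 < 1 / 2 * (Real.logb 2 p + 3 / 2) ^ 2 := by
  have hlog : (m : ℝ) ≤ Real.logb 2 p := by
    simpa using natCast_le_mul_logb_two (d := 1) (by simpa using hp.le)
  rcases hm.eq_or_lt with rfl | hm
  · have : (3 : ℝ) ≤ 2 * Real.logb 2 p := by
      simpa using natCast_le_mul_logb_two (a := 3) (d := 2) (by nlinarith)
    nlinarith
  · have : (2 : ℝ) ≤ m := by exact_mod_cast hm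
    nlinarith

theorem exists_isNatMediatedSet_card_lt {p q : ℕ} (hq : 0 < q) (hqp : 2 * q ≤ p) :
    ∃ S, IsNatMediatedSet {0, p} S ∧ q ∈ S ∧
      (S.card : ℝ) < 1 / 2 * (Real.logb 2 p + 3 / 2) ^ 2 := by
  have hm : 1 ≤ Nat.log 2 p := Nat.le_log_of_pow_le one_lt_two (by omega)
  have hlt : p < 2 ^ (Nat.log 2 p + 1) := Nat.lt_pow_succ_log_self one_lt_two p
  have hle : 2 ^ Nat.log 2 p ≤ p := Nat.pow_log_le_self 2 (by omega)
  generalize Nat.log 2 p = m at hm hlt hle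
  rcases hle.eq_or_lt with rfl | hp
  · obtain ⟨S, hS, hqS, hcard⟩ := exists_isNatMediatedSet_two_pow (m := m) (k := q) (by omega)
    refine ⟨S, hS, hqS, ?_⟩
    have hcard' : (S.card : ℝ) ≤ m + 2 := by exact_mod_cast hcard
    have hm' : (1 : ℝ) ≤ m := by exact_mod_cast hm
    push_cast
    rw [Real.logb_pow, Real.logb_self_eq_one one_lt_two, mul_one]
    nlinarith
  · obtain ⟨S, hS, hqS, hcard⟩ := exists_isNatMediatedSet_of_two_pow_lt hp hlt hq
      (by rw [pow_succ] at hlt; omega)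
    refine ⟨S, hS, hqS, lt_of_le_of_lt ?_ (two_mul_add_two_lt_of_two_pow_lt hm hp)⟩
    exact_mod_cast hcard

theorem injective_lineMap_natCast_div {V : Type*} [AddCommGroup V] [Module ℚ V] {v w : V}
    (hne : v ≠ w) {p : ℕ} (hp : p ≠ 0) :
    Function.Injective fun k : ℕ => AffineMap.lineMap v w ((k : ℚ) / p) :=
  (AffineMap.lineMap_injective ℚ hne).comp fun a b h => by simpa [hp] using h

theorem IsNatMediatedSet.isRatMediatedSet_image {n p : ℕ} {α₁ α₂ : Fin n → ℚ}
    {S : Finset ℕ} (hS : IsNatMediatedSet {0, p} S) (hne : α₁ ≠ α₂) (hp : p ≠ 0) :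
    IsRatMediatedSet {α₁, α₂} (S.image fun k : ℕ => AffineMap.lineMap α₁ α₂ ((k : ℚ) / p)) := by
  have hinj := injective_lineMap_natCast_div hne hp
  refine ⟨?_, fun u hu huA => ?_⟩
  · rw [insert_subset_iff, singleton_subset_iff]
    exact ⟨mem_image.2 ⟨0, hS.1 (mem_insert_self 0 _), by simp⟩,
      mem_image.2 ⟨p, hS.1 (mem_insert_of_mem (mem_singleton_self p)), by simp [hp]⟩⟩
  obtain ⟨k, hk, rfl⟩ := mem_image.1 hu
  obtain ⟨a, ha, b, hb, hab, h⟩ := hS.2 k hk fun hkA => huA <| by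
    rcases mem_insert.1 hkA with rfl | hkp
    · simp
    · simp [mem_singleton.1 hkp, hp]
  refine ⟨_, mem_image_of_mem _ ha, _, mem_image_of_mem _ hb, hinj.ne hab, ?_⟩
  have hk : (k : ℚ) = (a + b) / 2 := by
    rw [eq_div_iff two_ne_zero]
    exact_mod_cast (by omega : k * 2 = a + b)
  simp only [AffineMap.lineMap_apply_module, hk]
  module

theorem exists_isRatMediatedSet_lineMap_mem {n p q : ℕ} {α₁ α₂ : Fin n → ℚ} (hne : α₁ ≠ α₂)
    (hq : 0 < q) (hqp : q < p) :
    ∃ M, IsRatMediatedSet {α₁, α₂} M ∧ AffineMap.lineMap α₁ α₂ ((q : ℚ) / p) ∈ M ∧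
      (M.card : ℝ) < 1 / 2 * (Real.logb 2 p + 3 / 2) ^ 2 := by
  wlog h : 2 * q ≤ p generalizing α₁ α₂ q
  · obtain ⟨M, hM, hmem, hcard⟩ := this hne.symm (q := p - q) (by omega) (by omega) (by omega)
    refine ⟨M, pair_comm α₁ α₂ ▸ hM, ?_, hcard⟩
    rwa [Nat.cast_sub hqp.le, sub_div, div_self (Nat.cast_ne_zero.2 (by omega)),
      ← AffineMap.lineMap_apply_one_sub, sub_sub_cancel] at hmem
  obtain ⟨S, hS, hqS, hcard⟩ := exists_isNatMediatedSet_card_lt hq h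
  refine ⟨_, hS.isRatMediatedSet_image hne (by omega), mem_image_of_mem _ hqS, ?_⟩
  rwa [card_image_of_injective _ (injective_lineMap_natCast_div hne (by omega))]

theorem exists_ratMediatedSet_card_lt_general {n : ℕ} (α₁ α₂ : Fin n → ℚ) (hne : α₁ ≠ α₂)
    (p q : ℕ) (hq : 0 < q) (hqp : q < p) (β : Fin n → ℚ)
    (hβ : β = (1 - (q : ℚ) / p) • α₁ + ((q : ℚ) / p) • α₂) :
    ∃ M : Finset (Fin n → ℚ), IsRatMediatedSet {α₁, α₂} M ∧ β ∈ M ∧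
      (M.card : ℝ) < (1 / 2) * (Real.logb 2 (p : ℝ) + 3 / 2) ^ 2 := by
  rw [hβ, ← AffineMap.lineMap_apply_module]
  exact exists_isRatMediatedSet_lineMap_mem hne hq hqp

/-- Let `α₁ ≠ α₂` be two points of `ℚⁿ` and let
`β = (1 − q/p)·α₁ + (q/p)·α₂` where `p, q ∈ ℕ`, `0 < q < p` and `gcd(p,q) = 1`. Then there
exists an `{α₁,α₂}`-rational mediated set `M` containing `β` with
`#M < (1/2)·(log₂ p + 3/2)²`. -/
theorem exists_ratMediatedSet_card_lt {n : ℕ} (α₁ α₂ : Fin n → ℚ) (hne : α₁ ≠ α₂)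
    (p q : ℕ) (hq : 0 < q) (hqp : q < p) (hgcd : Nat.gcd p q = 1) (β : Fin n → ℚ)
    (hβ : β = (1 - (q : ℚ) / p) • α₁ + ((q : ℚ) / p) • α₂) :
    ∃ M : Finset (Fin n → ℚ), IsRatMediatedSet {α₁, α₂} M ∧ β ∈ M ∧
      (M.card : ℝ) < (1 / 2) * (Real.logb 2 (p : ℝ) + 3 / 2) ^ 2 :=
  exists_ratMediatedSet_card_lt_general α₁ α₂ hne p q hq hqp β hβ
end

section
/- Let α₁ ≠ α₂ be two points of ℚⁿ and let β be a rational point on the line segment between α₁ and α₂. Suppose that every coordinate of α₁, α₂ and β has odd denominator, and that every coordinate of α₁ and α₂ has even numerator. Then there exists an {α₁,α₂}-rational mediated set M containing β such that every coordinate of every point of M has odd denominator and every coordinate of every point of M \ {β} has even numerator. -/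
namespace Rat

variable {p : ℕ} [Fact p.Prime]

theorem padicValuation_eq_of_not_dvd_den {q : ℚ} (h : ¬ p ∣ q.den) :
    padicValuation p q = Int.padicValuation p q.num := by
  nth_rw 1 [← q.num_div_den, map_div₀, padicValuation_cast, ← Int.cast_natCast,
    padicValuation_cast, (Int.padicValuation_eq_one_iff (x := q.den)).2 (by exact_mod_cast h),
    div_one]

theorem padicValuation_lt_one_iff {q : ℚ} :
    padicValuation p q < 1 ↔ ¬ p ∣ q.den ∧ (p : ℤ) ∣ q.num := by
  refine ⟨fun h => ?_, fun ⟨hden, hnum⟩ => ?_⟩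
  · have hden := padicValuation_le_one_iff.1 h.le
    rw [padicValuation_eq_of_not_dvd_den hden, Int.padicValuation_lt_one_iff] at h
    exact ⟨hden, h⟩
  · rwa [padicValuation_eq_of_not_dvd_den hden, Int.padicValuation_lt_one_iff]

theorem padicValuation_div_natCast_le_one (m : ℕ) {d : ℕ} (hd : ¬ p ∣ d) :
    padicValuation p (m / d) ≤ 1 := by
  have hd' : Int.padicValuation p d = 1 := Int.padicValuation_eq_one_iff.2 (by exact_mod_cast hd)
  rw [map_div₀, ← Int.cast_natCast, ← Int.cast_natCast d, padicValuation_cast, padicValuation_cast,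
    hd', div_one]
  exact Int.padicValuation_le_one p m

theorem padicValuation_two_le_one_iff {q : ℚ} : padicValuation 2 q ≤ 1 ↔ Odd q.den := by
  rw [padicValuation_le_one_iff, Nat.odd_iff, Nat.two_dvd_ne_zero]

theorem padicValuation_two_lt_one_iff {q : ℚ} :
    padicValuation 2 q < 1 ↔ Odd q.den ∧ Even q.num := by
  rw [padicValuation_lt_one_iff, Nat.odd_iff, Nat.two_dvd_ne_zero, even_iff_two_dvd]
  rfl

theorem padicValuation_two_lt_one : padicValuation 2 2 < 1 :=
  padicValuation_two_lt_one_iff.2 ⟨odd_one, even_two⟩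

theorem den_two_mul_lt {q : ℚ} (h : Even q.den) : (2 * q).den < q.den := by
  have key := den_mul_den_eq_den_mul_gcd 2 q
  obtain ⟨c, hc⟩ : 2 ∣ ((2 : ℚ).num * q.num).natAbs.gcd ((2 : ℚ).den * q.den) :=
    Nat.dvd_gcd (by simp [Int.natAbs_mul]) (by simpa using h.two_dvd)
  rw [hc, den_ofNat, one_mul] at key
  have := q.den_pos
  have : 1 ≤ c := Nat.one_le_iff_ne_zero.2 (by rintro rfl; omega)
  nlinarith [(2 * q).den_pos]

end Rat

theorem Valuation.map_lineMap_lt_one {R Γ₀ : Type*} [CommRing R]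
    [LinearOrderedCommMonoidWithZero Γ₀] (v : Valuation R Γ₀) {a b s : R} (ha : v a < 1)
    (hb : v b < 1) (hs : v s ≤ 1) : v (AffineMap.lineMap a b s) < 1 := by
  rw [AffineMap.lineMap_apply_ring']
  refine v.map_add_lt ?_ ha
  rw [map_mul]
  exact Right.mul_lt_one_of_le_of_lt hs (v.map_sub_lt hb ha)

theorem AffineMap.lineMap_add_div_two {V : Type*} [AddCommGroup V] [Module ℚ V] (a b : V)
    (x y : ℚ) : lineMap a b ((x + y) / 2) = (2⁻¹ : ℚ) • (lineMap a b x + lineMap a b y) := by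
  simp only [lineMap_apply_module']
  module

theorem exists_two_mul_sub_natCast_mem_Icc {t : ℚ} (ht : t ∈ Set.Icc 0 1) :
    ∃ k : ℕ, (k = 0 ∨ k = 1) ∧ 2 * t - k ∈ Set.Icc (0 : ℚ) 1 := by
  rcases le_total t 2⁻¹ with h | h
  · exact ⟨0, Or.inl rfl, by constructor <;> push_cast <;> linarith [ht.1]⟩
  · exact ⟨1, Or.inr rfl, by constructor <;> push_cast <;> linarith [ht.2]⟩

open AffineMap Finset

variable {n : ℕ}

theorem IsRatMediatedSet.insert_average {A M : Finset (Fin n → ℚ)} (hM : IsRatMediatedSet A M)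
    {v w : Fin n → ℚ} (hv : v ∈ M) (hw : w ∈ M) (hvw : v ≠ w) :
    IsRatMediatedSet A (insert ((2⁻¹ : ℚ) • (v + w)) M) := by
  refine ⟨hM.1.trans (subset_insert _ _), fun u hu huA => ?_⟩
  rcases mem_insert.1 hu with rfl | hu
  · exact ⟨v, mem_insert_of_mem hv, w, mem_insert_of_mem hw, hvw, rfl⟩
  · obtain ⟨v', hv', w', hw', hvw', rfl⟩ := hM.2 u hu huA
    exact ⟨v', mem_insert_of_mem hv', w', mem_insert_of_mem hw', hvw', rfl⟩

theorem isRatMediatedSet_image_lineMap_range {α₁ α₂ : Fin n → ℚ} (hne : α₁ ≠ α₂) {d : ℕ}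
    (hd : d ≠ 0) :
    IsRatMediatedSet {α₁, α₂} ((range (d + 1)).image fun j : ℕ => lineMap α₁ α₂ ((j : ℚ) / d)) := by
  have hdQ : (d : ℚ) ≠ 0 := Nat.cast_ne_zero.2 hd
  refine ⟨?_, fun u hu huA => ?_⟩
  · rw [insert_subset_iff, singleton_subset_iff]
    exact ⟨mem_image.2 ⟨0, by simp, by simp⟩, mem_image.2 ⟨d, by simp, by simp [hdQ]⟩⟩
  obtain ⟨j, hj, rfl⟩ := mem_image.1 hu
  have hj0 : j ≠ 0 := by rintro rfl; simp at huA
  have hjd : j + 1 ≤ d := by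
    rcases (Nat.lt_succ_iff.1 (mem_range.1 hj)).lt_or_eq with h | rfl
    · exact h
    · simp [hdQ] at huA
  refine ⟨lineMap α₁ α₂ (((j - 1 : ℕ) : ℚ) / d), mem_image.2 ⟨j - 1, by simp; omega, rfl⟩,
    lineMap α₁ α₂ (((j + 1 : ℕ) : ℚ) / d), mem_image.2 ⟨j + 1, by simp; omega, rfl⟩, ?_, ?_⟩
  · rw [(lineMap_injective ℚ hne).ne_iff, Ne, div_left_inj' hdQ, Nat.cast_inj]
    omega
  · rw [← lineMap_add_div_two]
    congr 1
    push_cast [Nat.cast_sub (Nat.one_le_iff_ne_zero.2 hj0)]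
    ring

section TwoAdic

variable {α₁ α₂ : Fin n → ℚ} (hne : α₁ ≠ α₂) (hα₁ : ∀ i, Rat.padicValuation 2 (α₁ i) < 1)
  (hα₂ : ∀ i, Rat.padicValuation 2 (α₂ i) < 1)
include hne hα₁ hα₂

theorem exists_ratMediatedSet_lineMap_of_odd_den {t : ℚ} (ht : t ∈ Set.Icc 0 1)
    (hodd : Odd t.den) :
    ∃ M, IsRatMediatedSet {α₁, α₂} M ∧ lineMap α₁ α₂ t ∈ M ∧
      ∀ u ∈ M, ∀ i, Rat.padicValuation 2 (u i) < 1 := by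
  have hnum : 0 ≤ t.num := Rat.num_nonneg.2 ht.1
  refine ⟨_, isRatMediatedSet_image_lineMap_range hne t.den_ne_zero, mem_image.2
    ⟨t.num.toNat, mem_range.2 ?_, ?_⟩, fun u hu i => ?_⟩
  · have : t.num ≤ t.den := by
      have := ht.2
      rw [← t.num_div_den, div_le_one (by positivity)] at this
      exact_mod_cast this
    omega
  · rw [← Int.cast_natCast, Int.toNat_of_nonneg hnum, t.num_div_den]
  · obtain ⟨j, -, rfl⟩ := mem_image.1 hu
    exact (Rat.padicValuation 2).map_lineMap_lt_one (hα₁ i) (hα₂ i)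
      (Rat.padicValuation_div_natCast_le_one j hodd.not_two_dvd_nat)

theorem exists_ratMediatedSet_lineMap {t : ℚ} (ht : t ∈ Set.Icc 0 1)
    (hβ : ∀ i, Rat.padicValuation 2 (lineMap α₁ α₂ t i) ≤ 1) :
    ∃ M, IsRatMediatedSet {α₁, α₂} M ∧ lineMap α₁ α₂ t ∈ M ∧
      ∀ u ∈ M, u ≠ lineMap α₁ α₂ t → ∀ i, Rat.padicValuation 2 (u i) < 1 := by
  induction hd : t.den using Nat.strong_induction_on generalizing t with
  | _ d ih =>
    by_cases hodd : Odd t.den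
    · obtain ⟨M, hM, htM, hMv⟩ := exists_ratMediatedSet_lineMap_of_odd_den hne hα₁ hα₂ ht hodd
      exact ⟨M, hM, htM, fun u hu _ => hMv u hu⟩
    have heven : Even t.den := Nat.not_odd_iff_even.1 hodd
    obtain ⟨k, hk, ht'⟩ := exists_two_mul_sub_natCast_mem_Icc ht
    have hkt : (k : ℚ) ≠ t := by
      rintro rfl
      rcases hk with rfl | rfl <;> simp at heven
    set γ := lineMap α₁ α₂ (k : ℚ)
    set β' := lineMap α₁ α₂ (2 * t - k)
    have hγA : γ ∈ ({α₁, α₂} : Finset (Fin n → ℚ)) := by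
      rcases hk with rfl | rfl <;> simp [γ]
    have hγβ' : γ ≠ β' := by
      rw [(lineMap_injective ℚ hne).ne_iff]
      contrapose! hkt
      linarith
    have hβ_eq : lineMap α₁ α₂ t = (2⁻¹ : ℚ) • (γ + β') := by
      rw [← lineMap_add_div_two]
      congr 1
      ring
    have hβ'v : ∀ i, Rat.padicValuation 2 (β' i) < 1 := by
      intro i
      have hγv : Rat.padicValuation 2 (γ i) < 1 := by
        rcases mem_insert.1 hγA with h | h
        · exact h ▸ hα₁ i
        · exact mem_singleton.1 h ▸ hα₂ i
      have : β' i = 2 * lineMap α₁ α₂ t i - γ i := by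
        rw [hβ_eq]
        simp
      rw [this]
      refine (Rat.padicValuation 2).map_sub_lt ?_ hγv
      rw [map_mul, mul_comm]
      exact Right.mul_lt_one_of_le_of_lt (hβ i) Rat.padicValuation_two_lt_one
    have hden' : (2 * t - k).den < d := by
      rw [← hd, Rat.sub_natCast_den]
      exact Rat.den_two_mul_lt heven
    obtain ⟨M', hM', hβ'M', hM'v⟩ := ih _ hden' ht' (fun i => (hβ'v i).le) rfl
    refine ⟨insert (lineMap α₁ α₂ t) M',
      hβ_eq ▸ hM'.insert_average (hM'.1 hγA) hβ'M' hγβ', mem_insert_self _ _, ?_⟩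
    intro u hu hut
    have hu := (mem_insert.1 hu).resolve_left hut
    by_cases huβ' : u = β'
    · exact huβ' ▸ hβ'v
    · exact hM'v u hu huβ'

end TwoAdic

/-- Let `α₁ ≠ α₂` be two points of `ℚⁿ` and let `β` be a rational point on
the segment between them. If every coordinate of `α₁, α₂, β` has odd denominator and every
coordinate of `α₁, α₂` has even numerator, then there exists an `{α₁,α₂}`-rational mediated
set `M` containing `β` such that every coordinate of every point of `M` has odd denominator
and every coordinate of every point of `M \ {β}` has even numerator. -/
theorem exists_ratMediatedSet_parity {n : ℕ} (α₁ α₂ : Fin n → ℚ) (hne : α₁ ≠ α₂)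
    (β : Fin n → ℚ) (hβ : β ∈ segment ℚ α₁ α₂)
    (hden : ∀ i, Odd (α₁ i).den ∧ Odd (α₂ i).den ∧ Odd (β i).den)
    (hnum : ∀ i, Even (α₁ i).num ∧ Even (α₂ i).num) :
    ∃ M : Finset (Fin n → ℚ), IsRatMediatedSet {α₁, α₂} M ∧ β ∈ M ∧
      (∀ u ∈ M, ∀ i, Odd (u i).den) ∧
      (∀ u ∈ M, u ≠ β → ∀ i, Even (u i).num) := by
  obtain ⟨t, ht, rfl⟩ : ∃ t ∈ Set.Icc (0 : ℚ) 1, lineMap α₁ α₂ t = β := by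
    rwa [segment_eq_image_lineMap] at hβ
  have hα₁ i : Rat.padicValuation 2 (α₁ i) < 1 :=
    Rat.padicValuation_two_lt_one_iff.2 ⟨(hden i).1, (hnum i).1⟩
  have hα₂ i : Rat.padicValuation 2 (α₂ i) < 1 :=
    Rat.padicValuation_two_lt_one_iff.2 ⟨(hden i).2.1, (hnum i).2⟩
  have hβv i : Rat.padicValuation 2 (lineMap α₁ α₂ t i) ≤ 1 :=
    Rat.padicValuation_two_le_one_iff.2 (hden i).2.2
  obtain ⟨M, hM, hβM, hMv⟩ := exists_ratMediatedSet_lineMap hne hα₁ hα₂ ht hβv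
  refine ⟨M, hM, hβM, fun u hu i => ?_,
    fun u hu huβ i => (Rat.padicValuation_two_lt_one_iff.1 (hMv u hu huβ i)).2⟩
  rcases eq_or_ne u (lineMap α₁ α₂ t) with rfl | huβ
  · exact (hden i).2.2
  · exact (Rat.padicValuation_two_lt_one_iff.1 (hMv u hu huβ i)).1
end

section
/- Let 𝒜 = {α₁,…,α_m} be a trellis in ℕⁿ and let β be a lattice point in the relative interior of the convex hull of 𝒜. Then there exists an 𝒜-rational mediated set M containing β. -/
/-- A lattice point is even if all its coordinates are even. -/
def IsEvenPt {n : ℕ} (α : Fin n → ℕ) : Prop := ∀ i, Even (α i)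

/-- Embedding of lattice points into `ℝⁿ`. -/
noncomputable def toR {n : ℕ} (α : Fin n → ℕ) : Fin n → ℝ := fun i => (α i : ℝ)

/-- Embedding of lattice points into `ℚⁿ`. -/
def toQ {n : ℕ} (α : Fin n → ℕ) : Fin n → ℚ := fun i => (α i : ℚ)

/-- A trellis: a nonempty finite set of even lattice points that are affinely independent
(the vertices of a simplex). -/
def IsTrellis {n : ℕ} (A : Finset (Fin n → ℕ)) : Prop :=
  A.Nonempty ∧ (∀ α ∈ A, IsEvenPt α) ∧
    AffineIndependent ℝ (fun α : A => toR (α : Fin n → ℕ))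

/-!
A rational point in the real convex hull of affinely independent rational points is a
*rational* convex combination of them: its real barycentric coordinates are the unique solution
of a linear system with rational coefficients, so they are rational. It therefore suffices that
the points lying in some `S`-rational mediated set form a `ℚ`-convex set. Given such points
`u₁ ≠ u₂` and `t = a/q ∈ [0, 1]`, the grid `u₁ + (k/q)(u₂ - u₁)`, `0 ≤ k ≤ q`, is mediated over
`{u₁, u₂}`: the doubling map `k ↦ 2k` or `k ↦ 2k - q` exhibits each inner grid point as the
midpoint of an endpoint and another grid point.
-/

open Set Function Submodule

theorem Submodule.mem_span_of_algebraMap_comp_mem_span {K L ι κ : Type*} [Field K] [Field L]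
    [Algebra K L] [Fintype κ] {v : ι → κ → K} {x : κ → K}
    (hx : algebraMap K L ∘ x ∈ span L (range fun i => algebraMap K L ∘ v i)) :
    x ∈ span K (range v) := by
  classical
  by_contra hxv
  obtain ⟨f, hfx, hfv⟩ := exists_dual_map_eq_bot_of_notMem hxv inferInstance
  let g : (κ → L) →ₗ[L] L :=
    Fintype.linearCombination L fun j => algebraMap K L (f fun i => if j = i then 1 else 0)
  have hg : ∀ y : κ → K, g (algebraMap K L ∘ y) = algebraMap K L (f y) := fun y => by
    simp [g, Fintype.linearCombination_apply, LinearMap.pi_apply_eq_sum_univ f y, map_sum]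
  have hgv : span L (range fun i => algebraMap K L ∘ v i) ≤ LinearMap.ker g := by
    rw [span_le]
    rintro _ ⟨i, rfl⟩
    have hfvi : f (v i) = 0 := LinearMap.le_ker_iff_map.mpr hfv (subset_span (mem_range_self i))
    simp [hg, hfvi]
  apply hfx
  simpa [hg] using hgv hx

theorem exists_affine_weights_of_algebraMap {K L ι κ : Type*} [Field K] [Field L] [Algebra K L]
    [Fintype ι] [Fintype κ] {p : ι → κ → K} {x : κ → K} {s : Finset ι} {w : ι → L}
    (hw : ∑ i ∈ s, w i = 1) (hwx : ∑ i ∈ s, w i • (algebraMap K L ∘ p i) = algebraMap K L ∘ x) :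
    ∃ μ : ι → K, ∑ i, μ i = 1 ∧ ∑ i, μ i • p i = x := by
  -- affine weights of `y` are linear weights of the homogenized point `(y, 1)`
  let hom (y : κ → K) : Option κ → K := fun o => o.elim 1 y
  have hhom : algebraMap K L ∘ hom x ∈ span L (range fun i => algebraMap K L ∘ hom (p i)) := by
    have : ∑ i ∈ s, w i • (algebraMap K L ∘ hom (p i)) = algebraMap K L ∘ hom x := by
      funext o
      cases o with
      | none => simpa [hom, Finset.sum_apply] using hw
      | some j => simpa [hom, Finset.sum_apply] using congrFun hwx j
    exact this ▸ sum_mem fun i _ => smul_mem _ _ (subset_span (mem_range_self i))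
  obtain ⟨μ, hμ⟩ := (mem_span_range_iff_exists_fun K).mp (mem_span_of_algebraMap_comp_mem_span hhom)
  refine ⟨μ, by simpa [hom, Finset.sum_apply] using congrFun hμ none, ?_⟩
  funext j
  simpa [hom, Finset.sum_apply] using congrFun hμ (some j)

theorem mem_convexHull_of_ratCast_mem_convexHull {L ι κ : Type*} [Field L] [LinearOrder L]
    [IsStrictOrderedRing L] [Fintype ι] [Fintype κ] {p : ι → κ → ℚ} {x : κ → ℚ}
    (hp : AffineIndependent L fun i j => (p i j : L))
    (hx : (fun j => (x j : L)) ∈ convexHull L (range fun i j => (p i j : L))) :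
    x ∈ convexHull ℚ (range p) := by
  rw [convexHull_range_eq_exists_affineCombination] at hx
  obtain ⟨s, w, hw0, hw1, hwx⟩ := hx
  have hcast : ∀ y : κ → ℚ, algebraMap ℚ L ∘ y = fun j => (y j : L) :=
    fun y => funext fun j => eq_ratCast _ _
  obtain ⟨μ, hμ1, hμx⟩ := exists_affine_weights_of_algebraMap (K := ℚ) (p := p) (x := x) hw1
    (by simpa only [hcast, Finset.affineCombination_eq_linear_combination _ _ _ hw1] using hwx)
  have hμ1' : ∑ i, (μ i : L) = 1 := by exact_mod_cast hμ1
  have hμw : (s : Set ι).indicator w = fun i => (μ i : L) := by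
    rw [← Set.indicator_univ fun i => (μ i : L), ← Finset.coe_univ]
    refine hp.indicator_eq_of_affineCombination_eq _ _ _ _ hw1 hμ1' ?_
    rw [hwx, Finset.affineCombination_eq_linear_combination _ _ _ hμ1', ← hμx]
    funext j
    simp [Finset.sum_apply]
  refine mem_convexHull_of_exists_fintype μ p (fun i => ?_) hμ1 (mem_range_self ·) hμx
  have := Set.indicator_nonneg hw0 i
  rw [hμw] at this
  simpa using this

theorem IsRatMediatedSet.union {n : ℕ} {S T M G : Finset (Fin n → ℚ)}
    (hM : IsRatMediatedSet S M) (hG : IsRatMediatedSet T G) (hTM : T ⊆ M) :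
    IsRatMediatedSet S (M ∪ G) := by
  refine ⟨hM.1.trans Finset.subset_union_left, fun u hu huS => ?_⟩
  by_cases huM : u ∈ M
  · obtain ⟨v, hv, w, hw, hvw, rfl⟩ := hM.2 u huM huS
    exact ⟨v, Finset.mem_union_left G hv, w, Finset.mem_union_left G hw, hvw, rfl⟩
  · have huG : u ∈ G := (Finset.mem_union.mp hu).resolve_left huM
    obtain ⟨v, hv, w, hw, hvw, rfl⟩ := hG.2 u huG fun huT => huM (hTM huT)
    exact ⟨v, Finset.mem_union_right M hv, w, Finset.mem_union_right M hw, hvw, rfl⟩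

theorem exists_ratMediatedSet_pair_lineMap_mem {n : ℕ} {u₁ u₂ : Fin n → ℚ} (h : u₁ ≠ u₂)
    {t : ℚ} (ht₀ : 0 ≤ t) (ht₁ : t ≤ 1) :
    ∃ G, IsRatMediatedSet {u₁, u₂} G ∧ AffineMap.lineMap u₁ u₂ t ∈ G := by
  set q := t.den
  have hq : (q : ℚ) ≠ 0 := Nat.cast_ne_zero.mpr t.den_ne_zero
  let x : ℕ → Fin n → ℚ := fun k => AffineMap.lineMap u₁ u₂ ((k : ℚ) / q)
  have hx : Injective x := (AffineMap.lineMap_injective ℚ h).comp fun k l hkl => by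
    simpa [hq] using hkl
  have hx₀ : x 0 = u₁ := by simp [x]
  have hx₁ : x q = u₂ := by simp [x, hq]
  have hmid : ∀ {a b k : ℕ}, a + b = 2 * k → x k = (2⁻¹ : ℚ) • (x a + x b) := by
    intro a b k habk
    have : (a : ℚ) + b = 2 * k := by exact_mod_cast habk
    simp only [x, AffineMap.lineMap_apply_module]
    match_scalars <;> field_simp <;> linarith
  have hmem : ∀ {k}, k ≤ q → x k ∈ (Finset.range (q + 1)).image x := fun hk =>
    Finset.mem_image_of_mem x (Finset.mem_range.mpr (Nat.lt_succ_of_le hk))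
  refine ⟨(Finset.range (q + 1)).image x, ⟨?_, ?_⟩, ?_⟩
  · rw [Finset.insert_subset_iff, Finset.singleton_subset_iff, ← hx₀, ← hx₁]
    exact ⟨hmem (Nat.zero_le q), hmem le_rfl⟩
  · intro u hu hu₁₂
    obtain ⟨k, hk, rfl⟩ := Finset.mem_image.mp hu
    have hkq : k ≤ q := Nat.lt_succ_iff.mp (Finset.mem_range.mp hk)
    have hk₀ : k ≠ 0 := by rintro rfl; simp [hx₀] at hu₁₂
    have hk₁ : k ≠ q := by rintro rfl; simp [hx₁] at hu₁₂
    by_cases h2k : 2 * k ≤ q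
    · exact ⟨x 0, hmem (Nat.zero_le q), x (2 * k), hmem h2k, hx.ne (by omega), hmid (by omega)⟩
    · exact ⟨x q, hmem le_rfl, x (2 * k - q), hmem (by omega), hx.ne (by omega), hmid (by omega)⟩
  · have hnum : ((t.num.toNat : ℕ) : ℚ) = t.num := by
      exact_mod_cast Int.toNat_of_nonneg (Rat.num_nonneg.mpr ht₀)
    have hle : t.num.toNat ≤ q := by
      have := Rat.num_le_denom_iff.mpr ht₁
      omega
    convert hmem hle
    rw [hnum, Rat.num_div_den]

def ratMediatedHull {n : ℕ} (S : Finset (Fin n → ℚ)) : Set (Fin n → ℚ) :=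
  {u | ∃ M, IsRatMediatedSet S M ∧ u ∈ M}

theorem subset_ratMediatedHull {n : ℕ} (S : Finset (Fin n → ℚ)) :
    (S : Set (Fin n → ℚ)) ⊆ ratMediatedHull S :=
  fun _ hu => ⟨S, ⟨subset_rfl, fun _ hu hnot => absurd hu hnot⟩, hu⟩

theorem convex_ratMediatedHull {n : ℕ} (S : Finset (Fin n → ℚ)) :
    Convex ℚ (ratMediatedHull S) := by
  rintro u₁ ⟨M₁, hM₁, hu₁⟩ u₂ ⟨M₂, hM₂, hu₂⟩ a b ha hb hab
  obtain rfl : a = 1 - b := by linarith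
  rw [← AffineMap.lineMap_apply_module]
  by_cases h : u₁ = u₂
  · exact ⟨M₁, hM₁, by simpa [h] using hu₁⟩
  obtain ⟨G, hG, hG_mem⟩ := exists_ratMediatedSet_pair_lineMap_mem h hb (by linarith)
  have hpair : {u₁, u₂} ⊆ M₁ ∪ M₂ := by
    rw [Finset.insert_subset_iff, Finset.singleton_subset_iff]
    exact ⟨Finset.mem_union_left _ hu₁, Finset.mem_union_right _ hu₂⟩
  exact ⟨M₁ ∪ M₂ ∪ G, (hM₁.union hM₂ hM₁.1).union hG hpair, Finset.mem_union_right _ hG_mem⟩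

theorem convexHull_subset_ratMediatedHull {n : ℕ} (S : Finset (Fin n → ℚ)) :
    convexHull ℚ (S : Set (Fin n → ℚ)) ⊆ ratMediatedHull S :=
  convexHull_min (subset_ratMediatedHull S) (convex_ratMediatedHull S)

/-- Let `𝒜` be a trellis in `ℕⁿ` and let `β` be a lattice point in the
relative interior of the convex hull of `𝒜`. Then there exists an `𝒜`-rational mediated set
`M` containing `β`. -/
theorem exists_ratMediatedSet_of_trellis {n : ℕ} (A : Finset (Fin n → ℕ)) (hA : IsTrellis A)
    (β : Fin n → ℕ)
    (hβ : toR β ∈ intrinsicInterior ℝ (convexHull ℝ (toR '' (A : Set (Fin n → ℕ))))) :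
    ∃ M : Finset (Fin n → ℚ), IsRatMediatedSet (A.image toQ) M ∧ toQ β ∈ M := by
  have htoR : ∀ α : Fin n → ℕ, toR α = fun i => ((toQ α i : ℚ) : ℝ) := fun α => by
    funext i; simp [toR, toQ]
  obtain ⟨-, -, hAQ⟩ := hA
  have hβR := intrinsicInterior_subset hβ
  simp only [htoR, image_eq_range] at hAQ hβR
  have hβQ : toQ β ∈ convexHull ℚ (range fun α : (A : Set (Fin n → ℕ)) => toQ α) :=
    mem_convexHull_of_ratCast_mem_convexHull hAQ hβR
  rw [← image_eq_range, ← Finset.coe_image] at hβQ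
  exact convexHull_subset_ratMediatedHull _ hβQ
end
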